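/- Let w₋ < w_m and let w(t,x) be the global smooth solution of the Burgers equation ∂_t w + w ∂_x w = 0 with initial data w₀(x) = (w_m + w₋)/2 + ((w_m − w₋)/2)·tanh x, defined by the characteristics w(t,x) = w₀(x₀(t,x)) with x = x₀(t,x) + t·w₀(x₀(t,x)). Let w^r : ℝ → ℝ denote the rarefaction fan w^r(ξ) = w₋ for ξ ≤ w₋, w^r(ξ) = ξ for w₋ ≤ ξ ≤ w_m, and w^r(ξ) = w_m for ξ ≥ w_m. Then lim_{t→+∞} sup_{x∈ℝ} | w(t,x) − w^r(x/t) | = 0. -/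
import Mathlib


/-- Smoothed Riemann data for the Burgers equation:
`w₀(x) = (w_m + w₋)/2 + ((w_m - w₋)/2) tanh x`. -/
noncomputable def burgersInit (wminus wm : ℝ) : ℝ → ℝ :=
  fun x => (wm + wminus) / 2 + (wm - wminus) / 2 * Real.tanh x

open Real Filter in

lemma tanh_formula (y : ℝ) :
    Real.tanh y = (Real.exp y - Real.exp (-y)) / (Real.exp y + Real.exp (-y)) := by
  rw [Real.tanh_eq_sinh_div_cosh, Real.sinh_eq, Real.cosh_eq]
  have h : (0:ℝ) < Real.exp y + Real.exp (-y) := by positivity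
  field_simp

lemma tanh_lt_one' (y : ℝ) : Real.tanh y < 1 := by
  rw [tanh_formula]
  have h1 : (0:ℝ) < Real.exp y + Real.exp (-y) := by positivity
  have h2 : (0:ℝ) < Real.exp (-y) := Real.exp_pos _
  rw [div_lt_one h1]; linarith

lemma neg_one_lt_tanh' (y : ℝ) : -1 < Real.tanh y := by
  rw [tanh_formula]
  have h1 : (0:ℝ) < Real.exp y + Real.exp (-y) := by positivity
  have h2 : (0:ℝ) < Real.exp y := Real.exp_pos _
  rw [lt_div_iff₀ h1]; linarith

lemma one_sub_tanh_le (y : ℝ) : 1 - Real.tanh y ≤ 2 * Real.exp (-(2*y)) := by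
  rw [tanh_formula]
  have h1 : (0:ℝ) < Real.exp y + Real.exp (-y) := by positivity
  have h2 : (0:ℝ) < Real.exp y := Real.exp_pos _
  have h3 : (0:ℝ) < Real.exp (-y) := Real.exp_pos _
  have hmul : Real.exp y * Real.exp (-y) = 1 := by
    rw [← Real.exp_add]; simp
  have hsq : Real.exp (-(2*y)) = Real.exp (-y) * Real.exp (-y) := by
    rw [← Real.exp_add]; ring_nf
  rw [hsq, sub_le_iff_le_add, ← sub_le_iff_le_add', le_div_iff₀ h1]
  nlinarith [sq_nonneg (Real.exp (-y))]

lemma key_bound (wminus wm : ℝ) (h : wminus < wm) (t y : ℝ) (ht : 0 < t) :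
    |burgersInit wminus wm y - max wminus (min (y / t + burgersInit wminus wm y) wm)| ≤
      min (|y| / t) ((wm - wminus) * Real.exp (-(2 * |y|))) := by
  set u := burgersInit wminus wm y with hu
  have htanh1 := tanh_lt_one' y
  have htanh2 := neg_one_lt_tanh' y
  have hu1 : wminus < u := by rw [hu]; unfold burgersInit; nlinarith
  have hu2 : u < wm := by rw [hu]; unfold burgersInit; nlinarith
  set ξ := y / t + u with hξ
  refine le_min ?_ ?_
  · -- clamp is 1-Lipschitz and fixes u
    have hfix : max wminus (min u wm) = u := by
      rw [min_eq_left hu2.le, max_eq_right hu1.le]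
    have h1 : |u - max wminus (min ξ wm)| ≤ |u - ξ| := by
      calc |u - max wminus (min ξ wm)|
          = |max wminus (min u wm) - max wminus (min ξ wm)| := by rw [hfix]
        _ ≤ max |wminus - wminus| |min u wm - min ξ wm| := abs_max_sub_max_le_max _ _ _ _
        _ ≤ max |wminus - wminus| (max |u - ξ| |wm - wm|) :=
            max_le_max le_rfl (abs_min_sub_min_le_max _ _ _ _)
        _ ≤ |u - ξ| := by simp
    have h2 : |u - ξ| = |y| / t := by
      rw [hξ]
      have : u - (y / t + u) = -(y / t) := by ring
      rw [this, abs_neg, abs_div, abs_of_pos ht]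
    rw [← h2]; exact h1
  · rcases le_total 0 y with hy | hy
    · have habs : |y| = y := abs_of_nonneg hy
      have hξu : u ≤ ξ := by
        have : 0 ≤ y / t := div_nonneg hy ht.le
        rw [hξ]; linarith
      have hc1 : u ≤ max wminus (min ξ wm) :=
        le_trans (le_min hξu hu2.le) (le_max_right _ _)
      have hc2 : max wminus (min ξ wm) ≤ wm := max_le h.le (min_le_right _ _)
      have : |u - max wminus (min ξ wm)| = max wminus (min ξ wm) - u := by
        rw [abs_sub_comm, abs_of_nonneg (by linarith)]
      rw [this, habs]
      have hbd := one_sub_tanh_le y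
      rw [hu]; unfold burgersInit
      nlinarith
    · have habs : |y| = -y := abs_of_nonpos hy
      have hξu : ξ ≤ u := by
        have : y / t ≤ 0 := div_nonpos_of_nonpos_of_nonneg hy ht.le
        rw [hξ]; linarith
      have hfix : max wminus (min u wm) = u := by
        rw [min_eq_left hu2.le, max_eq_right hu1.le]
      have hc1 : max wminus (min ξ wm) ≤ u := by
        rw [← hfix]; exact max_le_max le_rfl (min_le_min hξu le_rfl)
      have hc2 : wminus ≤ max wminus (min ξ wm) := le_max_left _ _
      have : |u - max wminus (min ξ wm)| = u - max wminus (min ξ wm) := by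
        rw [abs_of_nonneg (by linarith)]
      rw [this, habs]
      have hbd := one_sub_tanh_le (-y)
      rw [Real.tanh_neg] at hbd
      have hexp : -(2 * -y) = 2 * y := by ring
      rw [hexp] at hbd
      have : -(2 * -y) = 2*y := by ring
      rw [hu]; unfold burgersInit
      have h2 : (-(2 * -y)) = 2 * y := by ring
      rw [h2]
      nlinarith [Real.exp_pos (2*y)]

/-- Uniform convergence of the approximate rarefaction wave to the rarefaction fan:
with `w(t,x) = w₀(X₀(t,x))` given by characteristics and the fan
`w^r(ξ) = max(w₋, min(ξ, w_m))`, one has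
`sup_x |w(t,x) - w^r(x/t)| → 0` as `t → ∞`. -/
theorem stmt_13 (wminus wm : ℝ) (h : wminus < wm)
    (X₀ : ℝ → ℝ → ℝ)
    (hX : ∀ t : ℝ, 0 ≤ t → ∀ x : ℝ, X₀ t x + t * burgersInit wminus wm (X₀ t x) = x) :
    Filter.Tendsto
      (fun t : ℝ =>
        ⨆ x : ℝ, |burgersInit wminus wm (X₀ t x) - max wminus (min (x / t) wm)|)
      Filter.atTop (nhds 0) := by
  set g : ℝ → ℝ := fun t => Real.log t / t + (wm - wminus) * Real.exp (-(2 * Real.log t))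
    with hg
  have hC : (0:ℝ) ≤ wm - wminus := by linarith
  -- g tends to 0
  have hg0 : Filter.Tendsto g Filter.atTop (nhds 0) := by
    have h1 : Filter.Tendsto (fun t : ℝ => Real.log t / t) Filter.atTop (nhds 0) :=
      Real.isLittleO_log_id_atTop.tendsto_div_nhds_zero
    have h2 : Filter.Tendsto (fun t : ℝ => 2 * Real.log t) Filter.atTop Filter.atTop :=
      Filter.Tendsto.const_mul_atTop (by norm_num) Real.tendsto_log_atTop
    have h3 : Filter.Tendsto (fun t : ℝ => -(2 * Real.log t)) Filter.atTop Filter.atBot :=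
      Filter.tendsto_neg_atBot_iff.mpr h2
    have h4 : Filter.Tendsto (fun t : ℝ => Real.exp (-(2 * Real.log t)))
        Filter.atTop (nhds 0) := Real.tendsto_exp_atBot.comp h3
    have h5 := h1.add ((h4.const_mul (wm - wminus)))
    simpa using h5
  -- pointwise bound for t ≥ 1
  have hpt : ∀ t : ℝ, 1 ≤ t → ∀ x : ℝ,
      |burgersInit wminus wm (X₀ t x) - max wminus (min (x / t) wm)| ≤ g t := by
    intro t ht1 x
    have ht : (0:ℝ) < t := lt_of_lt_of_le one_pos ht1
    have hlog : 0 ≤ Real.log t := Real.log_nonneg ht1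
    have hxt : x / t = X₀ t x / t + burgersInit wminus wm (X₀ t x) := by
      have hx := hX t ht.le x
      field_simp
      linarith
    rw [hxt]
    refine le_trans (key_bound wminus wm h t (X₀ t x) ht) ?_
    set m := |X₀ t x| with hm
    have hm0 : 0 ≤ m := abs_nonneg _
    rcases le_total m (Real.log t) with hc | hc
    · have h1 : m / t ≤ Real.log t / t := by
        gcongr
      have h2 : 0 ≤ (wm - wminus) * Real.exp (-(2 * Real.log t)) := by positivity
      calc min (m / t) ((wm - wminus) * Real.exp (-(2 * m))) ≤ m / t := min_le_left _ _
        _ ≤ g t := by rw [hg]; dsimp only; linarith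
    · have h1 : Real.exp (-(2 * m)) ≤ Real.exp (-(2 * Real.log t)) :=
        Real.exp_le_exp.mpr (by linarith)
      have h2 : 0 ≤ Real.log t / t := by positivity
      calc min (m / t) ((wm - wminus) * Real.exp (-(2 * m)))
          ≤ (wm - wminus) * Real.exp (-(2 * m)) := min_le_right _ _
        _ ≤ (wm - wminus) * Real.exp (-(2 * Real.log t)) :=
            mul_le_mul_of_nonneg_left h1 hC
        _ ≤ g t := by rw [hg]; dsimp only; linarith
  apply squeeze_zero' ?_ ?_ hg0
  · filter_upwards [Filter.eventually_ge_atTop (1:ℝ)] with t ht1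
    have hbdd : BddAbove (Set.range fun x : ℝ =>
        |burgersInit wminus wm (X₀ t x) - max wminus (min (x / t) wm)|) :=
      ⟨g t, by rintro _ ⟨x, rfl⟩; exact hpt t ht1 x⟩
    exact le_trans (abs_nonneg _) (le_ciSup hbdd 0)
  · filter_upwards [Filter.eventually_ge_atTop (1:ℝ)] with t ht1
    exact ciSup_le (hpt t ht1)
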